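/- arXiv:2105.01932 — 4 statements merged into one kernel-verified Lean document; each statement's English description precedes it below -/
import Mathlib

section
/- Let N ≥ 1 be an integer and let α, β ≥ 1 and 0 < δ ≤ min{α, β} be real constants. Then there exists a constant C = C(N, α, β, δ) > 0 such that for all x₁, x₂ ∈ ℝ^N with x₁ ≠ x₂ and all y ∈ ℝ^N, one has 1/((1+|y−x₁|)^α (1+|y−x₂|)^β) ≤ (C/|x₁−x₂|^δ) · ( 1/(1+|y−x₁|)^{α+β−δ} + 1/(1+|y−x₂|)^{α+β−δ} ). -/
/- Write `a = |y - x₁|`, `b = |y - x₂|`, `d = |x₁ - x₂|`. By the triangle inequality `d ≤ a + b`,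
so one of `a`, `b` is at least `d / 2`; say `a`. Then `(1 + a)^δ ≥ (d / 2)^δ` pays for the factor
`2^δ / d^δ`, and what is left, `1 / ((1 + a)^(α - δ) (1 + b)^β)`, is at most
`1 / (1 + min a b)^(α + β - δ)`, which is one of the two terms on the right. -/

section OneAddRpow

variable {a b γ β δ d : ℝ}

lemma one_div_one_add_rpow_mul_le_add (hγ : 0 ≤ γ) (hβ : 0 ≤ β) (ha : 0 ≤ a) (hb : 0 ≤ b) :
    1 / ((1 + a) ^ γ * (1 + b) ^ β) ≤
      1 / (1 + a) ^ (γ + β) + 1 / (1 + b) ^ (γ + β) := by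
  set m := min a b
  have hm : 0 < 1 + m := by positivity
  have hmin : (1 + m) ^ (γ + β) ≤ (1 + a) ^ γ * (1 + b) ^ β := by
    rw [Real.rpow_add hm]
    gcongr
    exacts [min_le_left a b, min_le_right a b]
  calc 1 / ((1 + a) ^ γ * (1 + b) ^ β) ≤ 1 / (1 + m) ^ (γ + β) :=
        one_div_le_one_div_of_le (by positivity) hmin
    _ ≤ 1 / (1 + a) ^ (γ + β) + 1 / (1 + b) ^ (γ + β) := by
        rcases min_choice a b with h | h <;> rw [show m = _ from h]
        · exact le_add_of_nonneg_right (by positivity)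
        · exact le_add_of_nonneg_left (by positivity)

lemma one_div_one_add_rpow_le_of_le_two_mul (hδ : 0 ≤ δ) (hd : 0 < d) (hda : d ≤ 2 * a) :
    1 / (1 + a) ^ δ ≤ 2 ^ δ / d ^ δ := by
  have hle : (d / 2) ^ δ ≤ (1 + a) ^ δ := by gcongr; linarith
  calc 1 / (1 + a) ^ δ ≤ 1 / (d / 2) ^ δ := one_div_le_one_div_of_le (by positivity) hle
    _ = 2 ^ δ / d ^ δ := by rw [Real.div_rpow hd.le zero_le_two, one_div_div]

lemma one_div_one_add_rpow_mul_le_of_le_two_mul {α : ℝ} (hδ : 0 ≤ δ) (hδα : δ ≤ α)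
    (hβ : 0 ≤ β) (ha : 0 ≤ a) (hb : 0 ≤ b) (hd : 0 < d) (hda : d ≤ 2 * a) :
    1 / ((1 + a) ^ α * (1 + b) ^ β) ≤
      2 ^ δ / d ^ δ * (1 / (1 + a) ^ (α + β - δ) + 1 / (1 + b) ^ (α + β - δ)) := by
  have hsplit : (1 + a) ^ α = (1 + a) ^ δ * (1 + a) ^ (α - δ) := by
    rw [← Real.rpow_add (by positivity), add_sub_cancel]
  calc 1 / ((1 + a) ^ α * (1 + b) ^ β)
      = 1 / (1 + a) ^ δ * (1 / ((1 + a) ^ (α - δ) * (1 + b) ^ β)) := by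
        rw [hsplit, mul_assoc, one_div_mul_one_div]
    _ ≤ 2 ^ δ / d ^ δ * (1 / (1 + a) ^ (α - δ + β) + 1 / (1 + b) ^ (α - δ + β)) :=
        mul_le_mul (one_div_one_add_rpow_le_of_le_two_mul hδ hd hda)
          (one_div_one_add_rpow_mul_le_add (sub_nonneg.2 hδα) hβ ha hb) (by positivity)
          (by positivity)
    _ = 2 ^ δ / d ^ δ * (1 / (1 + a) ^ (α + β - δ) + 1 / (1 + b) ^ (α + β - δ)) := by
        rw [sub_add_eq_add_sub]

end OneAddRpow

theorem one_div_one_add_dist_rpow_mul_le {X : Type*} [PseudoMetricSpace X] {α β δ : ℝ}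
    (hδ : 0 ≤ δ) (hδα : δ ≤ α) (hδβ : δ ≤ β) {x₁ x₂ y : X} (hx : 0 < dist x₁ x₂) :
    1 / ((1 + dist y x₁) ^ α * (1 + dist y x₂) ^ β) ≤
      2 ^ δ / dist x₁ x₂ ^ δ *
        (1 / (1 + dist y x₁) ^ (α + β - δ) + 1 / (1 + dist y x₂) ^ (α + β - δ)) := by
  have htri : dist x₁ x₂ ≤ dist y x₁ + dist y x₂ := dist_triangle_left x₁ x₂ y
  rcases le_total (dist x₁ x₂) (2 * dist y x₁) with h₁ | h₂
  · exact one_div_one_add_rpow_mul_le_of_le_two_mul hδ hδα (hδ.trans hδβ) dist_nonneg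
      dist_nonneg hx h₁
  · have := one_div_one_add_rpow_mul_le_of_le_two_mul hδ hδβ (hδ.trans hδα) dist_nonneg
      dist_nonneg hx (b := dist y x₁) (by linarith)
    rwa [mul_comm, add_comm β α, add_comm (1 / _)] at this

theorem stmt0_general (N : ℕ) (α β δ : ℝ)
    (hδ0 : 0 < δ) (hδ : δ ≤ min α β) :
    ∃ C : ℝ, 0 < C ∧ ∀ x₁ x₂ y : EuclideanSpace ℝ (Fin N), x₁ ≠ x₂ →
      1 / ((1 + ‖y - x₁‖) ^ α * (1 + ‖y - x₂‖) ^ β) ≤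
        C / ‖x₁ - x₂‖ ^ δ *
          (1 / (1 + ‖y - x₁‖) ^ (α + β - δ) + 1 / (1 + ‖y - x₂‖) ^ (α + β - δ)) := by
  refine ⟨2 ^ δ, by positivity, fun x₁ x₂ y hx => ?_⟩
  simpa only [dist_eq_norm] using one_div_one_add_dist_rpow_mul_le hδ0.le
    (hδ.trans (min_le_left α β)) (hδ.trans (min_le_right α β)) (dist_pos.2 hx) (y := y)

/-- Lemma A.1: for `α, β ≥ 1` and `0 < δ ≤ min α β`, there is `C > 0` such that for all
`x₁ ≠ x₂` and all `y` in `ℝ^N`,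
`1/((1+|y−x₁|)^α (1+|y−x₂|)^β) ≤ (C/|x₁−x₂|^δ) (1/(1+|y−x₁|)^{α+β−δ} + 1/(1+|y−x₂|)^{α+β−δ})`. -/
theorem stmt0 (N : ℕ) (hN : 1 ≤ N) (α β δ : ℝ) (hα : 1 ≤ α) (hβ : 1 ≤ β)
    (hδ0 : 0 < δ) (hδ : δ ≤ min α β) :
    ∃ C : ℝ, 0 < C ∧ ∀ x₁ x₂ y : EuclideanSpace ℝ (Fin N), x₁ ≠ x₂ →
      1 / ((1 + ‖y - x₁‖) ^ α * (1 + ‖y - x₂‖) ^ β) ≤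
        C / ‖x₁ - x₂‖ ^ δ *
          (1 / (1 + ‖y - x₁‖) ^ (α + β - δ) + 1 / (1 + ‖y - x₂‖) ^ (α + β - δ)) :=
  stmt0_general N α β δ hδ0 hδ
end

section
/- Let N ≥ 1 be an integer and let α ≥ β ≥ 1 be real constants with α > N. Then there exists a constant C = C(N, α, β) > 0 such that for all a, b ∈ ℝ^N with a ≠ b, ∫_{ℝ^N} (1+|y−a|)^{−α} (1+|y−b|)^{−β} dy ≤ C · |a−b|^{−β}. -/
/-!
Put `d = |a - b|`, `u = 1 + |y - a|`, `v = 1 + |y - b|`. Since `α ≥ β`, moving the larger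
exponent onto the smaller base only increases `u^{-α} v^{-β}`, so it is at most
`(min u v)^{-α} (max u v)^{-β}`. By the triangle inequality `max u v ≥ d / 2`, hence
`u^{-α} v^{-β} ≤ (d/2)^{-β} (u^{-α} + v^{-α})`, and by translation invariance each of the two
terms integrates to `∫ (1 + |y|)^{-α}`, which is finite because `α > N`.
-/

open MeasureTheory Set

namespace Real

lemma rpow_neg_mul_rpow_neg_le_min_max {u v α β : ℝ} (hu : 0 < u) (hv : 0 < v) (hβα : β ≤ α) :
    u ^ (-α) * v ^ (-β) ≤ min u v ^ (-α) * max u v ^ (-β) := by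
  rcases le_total u v with huv | hvu
  · rw [min_eq_left huv, max_eq_right huv]
  · rw [min_eq_right hvu, max_eq_left hvu]
    have hsplit : ∀ w : ℝ, 0 < w → w ^ (-α) = w ^ (-β) * w ^ (β - α) := fun w hw => by
      rw [← rpow_add hw]; ring_nf
    calc u ^ (-α) * v ^ (-β) = u ^ (-β) * (u ^ (β - α) * v ^ (-β)) := by
          rw [hsplit u hu]; ring
      _ ≤ u ^ (-β) * (v ^ (β - α) * v ^ (-β)) :=
          mul_le_mul_of_nonneg_left (mul_le_mul_of_nonneg_right
            (rpow_le_rpow_of_nonpos hv hvu (by linarith)) (rpow_nonneg hv.le _))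
            (rpow_nonneg hu.le _)
      _ = v ^ (-α) * u ^ (-β) := by rw [hsplit v hv]; ring

lemma min_rpow_neg_le_add {u v α : ℝ} (hu : 0 < u) (hv : 0 < v) :
    min u v ^ (-α) ≤ u ^ (-α) + v ^ (-α) := by
  rcases min_choice u v with h | h <;> rw [h]
  · exact le_add_of_nonneg_right (rpow_nonneg hv.le _)
  · exact le_add_of_nonneg_left (rpow_nonneg hu.le _)

end Real

section Normed

variable {E : Type*} [NormedAddCommGroup E]

lemma one_add_norm_rpow_neg_mul_le {α β : ℝ} (hβ : 0 ≤ β) (hβα : β ≤ α) {a b : E} (hab : a ≠ b)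
    (y : E) :
    (1 + ‖y - a‖) ^ (-α) * (1 + ‖y - b‖) ^ (-β) ≤
      (‖a - b‖ / 2) ^ (-β) * ((1 + ‖y - a‖) ^ (-α) + (1 + ‖y - b‖) ^ (-α)) := by
  have hu : 0 < 1 + ‖y - a‖ := by positivity
  have hv : 0 < 1 + ‖y - b‖ := by positivity
  have hd : 0 < ‖a - b‖ / 2 := by simpa [sub_eq_zero] using hab
  have hmax : ‖a - b‖ / 2 ≤ max (1 + ‖y - a‖) (1 + ‖y - b‖) := by
    have htri : ‖a - b‖ ≤ ‖y - a‖ + ‖y - b‖ :=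
      norm_sub_rev a y ▸ norm_sub_le_norm_sub_add_norm_sub a y b
    linarith [le_max_left (1 + ‖y - a‖) (1 + ‖y - b‖), le_max_right (1 + ‖y - a‖) (1 + ‖y - b‖)]
  calc (1 + ‖y - a‖) ^ (-α) * (1 + ‖y - b‖) ^ (-β)
      ≤ min (1 + ‖y - a‖) (1 + ‖y - b‖) ^ (-α) * max (1 + ‖y - a‖) (1 + ‖y - b‖) ^ (-β) :=
        Real.rpow_neg_mul_rpow_neg_le_min_max hu hv hβα
    _ ≤ ((1 + ‖y - a‖) ^ (-α) + (1 + ‖y - b‖) ^ (-α)) * (‖a - b‖ / 2) ^ (-β) :=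
        mul_le_mul (Real.min_rpow_neg_le_add hu hv)
          (Real.rpow_le_rpow_of_nonpos hd hmax (by linarith)) (by positivity) (by positivity)
    _ = _ := mul_comm _ _

variable [MeasurableSpace E] [MeasurableAdd E] {μ : Measure E} [μ.IsAddRightInvariant]

lemma integral_one_add_norm_rpow_neg_mul_le {α β : ℝ} (hβ : 0 ≤ β) (hβα : β ≤ α)
    (hint : Integrable (fun y => (1 + ‖y‖) ^ (-α)) μ) {a b : E} (hab : a ≠ b) :
    ∫ y, (1 + ‖y - a‖) ^ (-α) * (1 + ‖y - b‖) ^ (-β) ∂μ ≤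
      2 ^ (β + 1) * (∫ y, (1 + ‖y‖) ^ (-α) ∂μ) * ‖a - b‖ ^ (-β) := by
  have hIa := hint.comp_sub_right a
  have hIb := hint.comp_sub_right b
  calc ∫ y, (1 + ‖y - a‖) ^ (-α) * (1 + ‖y - b‖) ^ (-β) ∂μ
      ≤ ∫ y, (‖a - b‖ / 2) ^ (-β) * ((1 + ‖y - a‖) ^ (-α) + (1 + ‖y - b‖) ^ (-α)) ∂μ :=
        integral_mono_of_nonneg (ae_of_all _ fun y => by positivity)
          ((hIa.add hIb).const_mul _) (ae_of_all _ (one_add_norm_rpow_neg_mul_le hβ hβα hab))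
    _ = (‖a - b‖ / 2) ^ (-β) * (2 * ∫ y, (1 + ‖y‖) ^ (-α) ∂μ) := by
        rw [integral_const_mul, integral_add hIa hIb,
          integral_sub_right_eq_self (fun y => (1 + ‖y‖) ^ (-α)) a,
          integral_sub_right_eq_self (fun y => (1 + ‖y‖) ^ (-α)) b, two_mul]
    _ = 2 ^ (β + 1) * (∫ y, (1 + ‖y‖) ^ (-α) ∂μ) * ‖a - b‖ ^ (-β) := by
        rw [Real.div_rpow (norm_nonneg _) zero_le_two, Real.rpow_neg zero_le_two,
          Real.rpow_add_one two_ne_zero]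
        field_simp

end Normed

lemma integral_one_add_norm_rpow_neg_pos {E : Type*} [NormedAddCommGroup E] [MeasurableSpace E]
    {μ : Measure E} [NeZero μ] {α : ℝ} (hint : Integrable (fun y => (1 + ‖y‖) ^ (-α)) μ) :
    0 < ∫ y, (1 + ‖y‖) ^ (-α) ∂μ := by
  have hsupp : Function.support (fun y : E => (1 + ‖y‖) ^ (-α)) = univ :=
    eq_univ_of_forall fun y => (Real.rpow_pos_of_pos (by positivity) _).ne'
  rw [integral_pos_iff_support_of_nonneg (fun y => by positivity) hint, hsupp]
  exact Measure.measure_univ_pos.mpr (NeZero.ne μ)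

theorem stmt1_general (N : ℕ) (α β : ℝ) (hβ : 1 ≤ β) (hβα : β ≤ α) (hα : (N : ℝ) < α) :
    ∃ C : ℝ, 0 < C ∧ ∀ a b : EuclideanSpace ℝ (Fin N), a ≠ b →
      (∫ y : EuclideanSpace ℝ (Fin N),
          (1 + ‖y - a‖) ^ (-α) * (1 + ‖y - b‖) ^ (-β)) ≤ C * ‖a - b‖ ^ (-β) := by
  have hint : Integrable (fun y : EuclideanSpace ℝ (Fin N) => (1 + ‖y‖) ^ (-α)) :=
    integrable_one_add_norm (by rwa [finrank_euclideanSpace_fin])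
  exact ⟨_, mul_pos (by positivity) (integral_one_add_norm_rpow_neg_pos hint),
    fun a b hab => integral_one_add_norm_rpow_neg_mul_le (by linarith) hβα hint hab⟩

/-- For `α ≥ β ≥ 1` with `α > N`, there is `C > 0` such that for all `a ≠ b` in `ℝ^N`,
`∫_{ℝ^N} (1+|y−a|)^{−α} (1+|y−b|)^{−β} dy ≤ C |a−b|^{−β}`. -/
theorem stmt1 (N : ℕ) (hN : 1 ≤ N) (α β : ℝ) (hβ : 1 ≤ β) (hβα : β ≤ α) (hα : (N : ℝ) < α) :
    ∃ C : ℝ, 0 < C ∧ ∀ a b : EuclideanSpace ℝ (Fin N), a ≠ b →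
      (∫ y : EuclideanSpace ℝ (Fin N),
          (1 + ‖y - a‖) ^ (-α) * (1 + ‖y - b‖) ^ (-β)) ≤ C * ‖a - b‖ ^ (-β) :=
  stmt1_general N α β hβ hβα hα
end

section
/- Let N ≥ 1 be an integer, ρ > 0, and let α, β be real constants with α > N and 0 < β < N. Then there exists a constant C = C(N, α, β, ρ) > 0 such that for all x, y ∈ ℝ^N and all t > 0 satisfying |y−x|² + t² ≥ ρ², one has ∫_{ℝ^N} 1/((t+|z|)^α · |y−z−x|^β) dz ≤ C · ( (1+|y−x|)^{−β} · t^{−(α−N)} + (1+|y−x|)^{−(α+β−N)} ). -/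
/-!
Put `w = y - x` and `R = (t + |w|) / 2`. By the triangle inequality `t + |z| ≥ R` on the ball
`|z - w| < R`, and `|w - z| ≥ R` off it, so the integrand is at most
`R^{-α} |z - w|^{-β} 1_{|z - w| < R} + R^{-β} (t + |z|)^{-α}`. By scaling,
`∫_{|u| < R} |u|^{-β} du = R^{N-β} K₁` and `∫ (t + |z|)^{-α} dz = t^{N-α} K₂`, where `K₁` and `K₂`
are finite because `β < N < α`. Finally `t + |w| ≥ ρ` makes `R` comparable to `1 + |w|`.
-/

open MeasureTheory Set Metric Module

theorem rpow_neg_le_mul_rpow_neg {u v c γ : ℝ} (hu : 0 < u) (hc : 0 < c) (huv : u ≤ c * v)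
    (hγ : 0 ≤ γ) : v ^ (-γ) ≤ c ^ γ * u ^ (-γ) :=
  calc v ^ (-γ) ≤ (u / c) ^ (-γ) :=
        Real.rpow_le_rpow_of_nonpos (div_pos hu hc) ((div_le_iff₀' hc).2 huv) (neg_nonpos.2 hγ)
    _ = c ^ γ * u ^ (-γ) := by
        rw [Real.div_rpow hu.le hc.le, Real.rpow_neg hc.le, div_inv_eq_mul, mul_comm]

theorem one_add_le_mul_of_sq_le_sq_add_sq {ρ t d : ℝ} (hρ : 0 < ρ) (ht : 0 ≤ t) (hd : 0 ≤ d)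
    (hρtd : ρ ^ 2 ≤ d ^ 2 + t ^ 2) : 1 + d ≤ 2 * (1 + ρ⁻¹) * ((t + d) / 2) := by
  have hρd : ρ ≤ t + d := by nlinarith
  have : 1 ≤ (t + d) / ρ := (one_le_div hρ).2 hρd
  have : 2 * (1 + ρ⁻¹) * ((t + d) / 2) = (t + d) / ρ + (t + d) := by ring
  linarith

theorem add_norm_rpow_neg_eq_mul {E : Type*} [NormedAddCommGroup E] [NormedSpace ℝ E] {t : ℝ}
    (ht : 0 < t) (α : ℝ) (z : E) :
    (t + ‖z‖) ^ (-α) = t ^ (-α) * (1 + ‖t⁻¹ • z‖) ^ (-α) := by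
  rw [norm_smul, Real.norm_of_nonneg (inv_nonneg.2 ht.le), ← Real.mul_rpow ht.le (by positivity),
    mul_add, mul_one, ← mul_assoc, mul_inv_cancel₀ ht.ne', one_mul]

theorem one_div_add_norm_rpow_mul_norm_rpow_le {E : Type*} [NormedAddCommGroup E] {t R α β : ℝ}
    (w z : E) (hα : 0 ≤ α) (hβ : 0 ≤ β) (ht : 0 ≤ t) (hR : 0 < R) (htw : 2 * R ≤ t + ‖w‖) :
    1 / ((t + ‖z‖) ^ α * ‖w - z‖ ^ β) ≤
      R ^ (-α) * (ball 0 R).indicator (fun u => ‖u‖ ^ (-β)) (z - w) +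
        R ^ (-β) * (t + ‖z‖) ^ (-α) := by
  have htz : 0 ≤ t + ‖z‖ := by positivity
  rw [one_div, mul_inv, ← Real.rpow_neg htz, ← Real.rpow_neg (norm_nonneg _), norm_sub_rev]
  have htri : ‖w‖ ≤ ‖z - w‖ + ‖z‖ := by
    simpa [norm_sub_rev] using norm_sub_le_norm_sub_add_norm_sub w z 0
  by_cases hzw : z - w ∈ ball 0 R
  · have hRz : R ≤ t + ‖z‖ := by linarith [mem_ball_zero_iff.1 hzw]
    rw [indicator_of_mem hzw]
    refine le_add_of_le_of_nonneg ?_ (by positivity)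
    exact mul_le_mul_of_nonneg_right (Real.rpow_le_rpow_of_nonpos hR hRz (neg_nonpos.2 hα))
      (by positivity)
  · have hRzw : R ≤ ‖z - w‖ := not_lt.1 fun h => hzw (mem_ball_zero_iff.2 h)
    rw [indicator_of_notMem hzw, mul_zero, zero_add, mul_comm (R ^ (-β))]
    exact mul_le_mul_of_nonneg_left (Real.rpow_le_rpow_of_nonpos hR hRzw (neg_nonpos.2 hβ))
      (by positivity)

section HaarIntegrals

variable {E : Type*} [NormedAddCommGroup E] [NormedSpace ℝ E] [FiniteDimensional ℝ E]
  [MeasurableSpace E] [BorelSpace E] (μ : Measure E) [μ.IsAddHaarMeasure]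

theorem setIntegral_ball_norm_rpow_neg {R : ℝ} (hR : 0 < R) (β : ℝ) :
    ∫ z in ball 0 R, ‖z‖ ^ (-β) ∂μ =
      R ^ ((finrank ℝ E : ℝ) - β) * ∫ z in ball 0 1, ‖z‖ ^ (-β) ∂μ := by
  have hscale := Measure.setIntegral_comp_smul_of_pos μ (fun z => ‖z‖ ^ (-β)) (ball 0 1) hR
  simp only [norm_smul, Real.norm_of_nonneg hR.le, Real.mul_rpow hR.le (norm_nonneg _),
    integral_const_mul, smul_unitBall_of_pos hR, smul_eq_mul] at hscale
  rw [Real.rpow_neg hR.le] at hscale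
  rw [Real.rpow_sub hR, Real.rpow_natCast]
  field_simp at hscale ⊢
  linarith

theorem integral_add_norm_rpow_neg {t : ℝ} (ht : 0 < t) (α : ℝ) :
    ∫ z, (t + ‖z‖) ^ (-α) ∂μ = t ^ ((finrank ℝ E : ℝ) - α) * ∫ z, (1 + ‖z‖) ^ (-α) ∂μ := by
  simp_rw [add_norm_rpow_neg_eq_mul ht, integral_const_mul,
    Measure.integral_comp_inv_smul_of_nonneg μ (fun z => (1 + ‖z‖) ^ (-α)) ht.le, smul_eq_mul,
    ← Real.rpow_natCast, ← mul_assoc, ← Real.rpow_add ht, neg_add_eq_sub]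

theorem integrable_add_norm_rpow_neg {t α : ℝ} (ht : 0 < t) (hα : (finrank ℝ E : ℝ) < α) :
    Integrable (fun z => (t + ‖z‖) ^ (-α)) μ := by
  simp_rw [add_norm_rpow_neg_eq_mul ht]
  exact ((integrable_one_add_norm hα).comp_smul (inv_ne_zero ht.ne')).const_mul _

theorem integrableOn_ball_norm_rpow_neg {β : ℝ} (hβ0 : 0 ≤ β) (hβ : β < finrank ℝ E) (R : ℝ) :
    IntegrableOn (fun z => ‖z‖ ^ (-β)) (ball 0 R) μ := by
  refine integrableOn_ball_of_norm_le_rpow (C := 1) ?_ hβ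
    (Filter.Eventually.of_forall fun z => ?_)
    (by fun_prop : Measurable fun z : E => ‖z‖ ^ (-β)).aestronglyMeasurable
  · exact_mod_cast hβ0.trans_lt hβ
  · simp [abs_of_nonneg (Real.rpow_nonneg (norm_nonneg z) _)]

theorem integral_one_div_add_norm_rpow_mul_norm_rpow_le {t α β : ℝ} (ht : 0 < t)
    (hα : (finrank ℝ E : ℝ) < α) (hβ0 : 0 ≤ β) (hβ : β < finrank ℝ E) (w : E) :
    ∫ z, 1 / ((t + ‖z‖) ^ α * ‖w - z‖ ^ β) ∂μ ≤
      ((t + ‖w‖) / 2) ^ ((finrank ℝ E : ℝ) - β - α) * ∫ z in ball 0 1, ‖z‖ ^ (-β) ∂μ +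
        ((t + ‖w‖) / 2) ^ (-β) * t ^ ((finrank ℝ E : ℝ) - α) * ∫ z, (1 + ‖z‖) ^ (-α) ∂μ := by
  set R := (t + ‖w‖) / 2
  have hR : 0 < R := by positivity
  have hα0 : 0 ≤ α := (Nat.cast_nonneg _).trans hα.le
  have hnear : Integrable (fun z => R ^ (-α) * (ball 0 R).indicator (‖·‖ ^ (-β)) (z - w)) μ :=
    (((integrableOn_ball_norm_rpow_neg μ hβ0 hβ R).integrable_indicator
      measurableSet_ball).comp_sub_right w).const_mul _
  have hfar : Integrable (fun z => R ^ (-β) * (t + ‖z‖) ^ (-α)) μ :=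
    (integrable_add_norm_rpow_neg μ ht hα).const_mul _
  calc ∫ z, 1 / ((t + ‖z‖) ^ α * ‖w - z‖ ^ β) ∂μ
      ≤ ∫ z, (R ^ (-α) * (ball 0 R).indicator (‖·‖ ^ (-β)) (z - w) +
          R ^ (-β) * (t + ‖z‖) ^ (-α)) ∂μ :=
        integral_mono_of_nonneg (Filter.Eventually.of_forall fun z => by positivity)
          (hnear.add hfar) (Filter.Eventually.of_forall fun z =>
            one_div_add_norm_rpow_mul_norm_rpow_le w z hα0 hβ0 ht.le hR
              (mul_div_cancel₀ _ two_ne_zero).le)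
    _ = R ^ (-α) * ∫ z in ball 0 R, ‖z‖ ^ (-β) ∂μ + R ^ (-β) * ∫ z, (t + ‖z‖) ^ (-α) ∂μ := by
        rw [integral_add hnear hfar, integral_const_mul, integral_const_mul,
          integral_sub_right_eq_self (fun u => (ball 0 R).indicator (‖·‖ ^ (-β)) u) w,
          integral_indicator measurableSet_ball]
    _ = _ := by
        rw [setIntegral_ball_norm_rpow_neg μ hR, integral_add_norm_rpow_neg μ ht, ← mul_assoc,
          ← Real.rpow_add hR, ← mul_assoc, neg_add_eq_sub, sub_right_comm]

theorem exists_integral_one_div_add_norm_rpow_mul_norm_rpow_le {ρ α β : ℝ} (hρ : 0 < ρ)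
    (hα : (finrank ℝ E : ℝ) < α) (hβ0 : 0 ≤ β) (hβ : β < finrank ℝ E) :
    ∃ C : ℝ, 0 < C ∧ ∀ w : E, ∀ t : ℝ, 0 < t → ρ ^ 2 ≤ ‖w‖ ^ 2 + t ^ 2 →
      ∫ z, 1 / ((t + ‖z‖) ^ α * ‖w - z‖ ^ β) ∂μ ≤
        C * ((1 + ‖w‖) ^ (-β) * t ^ (-(α - finrank ℝ E)) +
          (1 + ‖w‖) ^ (-(α + β - finrank ℝ E))) := by
  set n : ℝ := (finrank ℝ E : ℝ)
  set K₁ := ∫ z in ball 0 1, ‖z‖ ^ (-β) ∂μ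
  set K₂ := ∫ z, (1 + ‖z‖) ^ (-α) ∂μ
  have hK₁ : 0 ≤ K₁ := setIntegral_nonneg measurableSet_ball fun z _ => by positivity
  have hK₂ : 0 ≤ K₂ := integral_nonneg fun z => by positivity
  set c := 2 * (1 + ρ⁻¹)
  refine ⟨c ^ (α + β - n) * K₁ + c ^ β * K₂ + 1, by positivity, fun w t ht hρt => ?_⟩
  have hcw := one_add_le_mul_of_sq_le_sq_add_sq hρ ht.le (norm_nonneg w) hρt
  have h₁ := rpow_neg_le_mul_rpow_neg (γ := α + β - n) (by positivity) (by positivity) hcw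
    (by linarith)
  have h₂ := rpow_neg_le_mul_rpow_neg (γ := β) (by positivity) (by positivity) hcw hβ0
  have hkernel := integral_one_div_add_norm_rpow_mul_norm_rpow_le μ ht hα hβ0 hβ w
  rw [show n - β - α = -(α + β - n) by ring, show n - α = -(α - n) by ring] at hkernel
  have hA : 0 ≤ c ^ (α + β - n) := by positivity
  have hB : 0 ≤ c ^ β := by positivity
  have hP : 0 ≤ (1 + ‖w‖) ^ (-(α + β - n)) := by positivity
  have hQT : 0 ≤ (1 + ‖w‖) ^ (-β) * t ^ (-(α - n)) := by positivity
  calc _ ≤ _ := hkernel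
    _ ≤ c ^ (α + β - n) * (1 + ‖w‖) ^ (-(α + β - n)) * K₁ +
          c ^ β * (1 + ‖w‖) ^ (-β) * t ^ (-(α - n)) * K₂ := by gcongr
    _ ≤ _ := by
        nlinarith [mul_nonneg (mul_nonneg hA hK₁) hQT, mul_nonneg (mul_nonneg hB hK₂) hP]

end HaarIntegrals

theorem stmt2_general (N : ℕ) (ρ α β : ℝ) (hρ : 0 < ρ) (hα : (N : ℝ) < α)
    (hβ0 : 0 < β) (hβ : β < N) :
    ∃ C : ℝ, 0 < C ∧ ∀ x y : EuclideanSpace ℝ (Fin N), ∀ t : ℝ, 0 < t →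
      ρ ^ 2 ≤ ‖y - x‖ ^ 2 + t ^ 2 →
      (∫ z : EuclideanSpace ℝ (Fin N), 1 / ((t + ‖z‖) ^ α * ‖y - z - x‖ ^ β)) ≤
        C * ((1 + ‖y - x‖) ^ (-β) * t ^ (-(α - (N : ℝ))) +
          (1 + ‖y - x‖) ^ (-(α + β - (N : ℝ)))) := by
  have hdim : finrank ℝ (EuclideanSpace ℝ (Fin N)) = N := finrank_euclideanSpace_fin
  obtain ⟨C, hC, hbound⟩ := exists_integral_one_div_add_norm_rpow_mul_norm_rpow_le volume hρ
    (by rwa [hdim]) hβ0.le (by rwa [hdim])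
  refine ⟨C, hC, fun x y t ht hρt => ?_⟩
  simpa only [sub_right_comm y _ x, hdim] using hbound (y - x) t ht hρt

/-- Lemma A.3, first inequality: for `α > N` and `0 < β < N`, there is `C > 0` such that
whenever `|y−x|² + t² ≥ ρ²` and `t > 0`,
`∫_{ℝ^N} dz /((t+|z|)^α |y−z−x|^β) ≤ C ((1+|y−x|)^{−β} t^{−(α−N)} + (1+|y−x|)^{−(α+β−N)})`. -/
theorem stmt2 (N : ℕ) (hN : 1 ≤ N) (ρ α β : ℝ) (hρ : 0 < ρ) (hα : (N : ℝ) < α)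
    (hβ0 : 0 < β) (hβ : β < N) :
    ∃ C : ℝ, 0 < C ∧ ∀ x y : EuclideanSpace ℝ (Fin N), ∀ t : ℝ, 0 < t →
      ρ ^ 2 ≤ ‖y - x‖ ^ 2 + t ^ 2 →
      (∫ z : EuclideanSpace ℝ (Fin N), 1 / ((t + ‖z‖) ^ α * ‖y - z - x‖ ^ β)) ≤
        C * ((1 + ‖y - x‖) ^ (-β) * t ^ (-(α - (N : ℝ))) +
          (1 + ‖y - x‖) ^ (-(α + β - (N : ℝ)))) :=
  stmt2_general N ρ α β hρ hα hβ0 hβ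
end

section
/- Let N ≥ 1 be an integer and let ρ > θ > 0 and α, β be real constants with α > N and 0 < β < N. Then there exists a constant C = C(N, α, β, ρ) > 0, independent of θ, such that for all x, y ∈ ℝ^N and all t > 0 satisfying |y−x|² + t² ≥ ρ², one has ∫_{ℝ^N \ B_θ(0)} 1/((t+|z|)^α · |y−z−x|^β) dz ≤ C · (1+|y−x|)^{−β} · θ^{−(α−N)}. -/
/-!
With `a = y - x`, the hypothesis gives `t + ‖a‖ ≥ ρ`, hence
`t + ‖z‖ + ‖a - z‖ ≥ t + ‖a‖ ≥ (min ρ 1 / 2) (1 + ‖a‖)`, so at every `z` either `t + ‖z‖` or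
`‖a - z‖` is at least `s = (min ρ 1 / 4) (1 + ‖a‖)`. Where `‖a - z‖ ≥ s` the integrand is at most
`s^(-β) ‖z‖^(-α)`, whose integral off `B_θ` is `≍ θ^(N-α)`. Where `‖a - z‖ < s`, we have
`t + ‖z‖ ≥ max s θ`, so `(t + ‖z‖)^(-α) ≤ θ^(-(α-N)) s^(-N)`, and the remaining factor
`‖a - z‖^(-β)` integrates over the ball of radius `s` to `≍ s^(N-β)`. Both pieces are
`≍ s^(-β) θ^(-(α-N))`.
-/

open MeasureTheory Set

noncomputable section

open Metric Module

local notation "dim" => Module.finrank ℝ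

theorem indicator_preimage_norm {E : Type*} [Norm E] (g : ℝ → ℝ) (s : Set ℝ) :
    ((‖·‖) ⁻¹' s).indicator (fun x : E => g ‖x‖) = fun x => s.indicator g ‖x‖ :=
  funext fun _ => indicator_comp_right (‖·‖)

theorem pow_mul_indicator (n : ℕ) (g : ℝ → ℝ) (s : Set ℝ) :
    (fun r : ℝ => r ^ n * s.indicator g r) = s.indicator (fun r => r ^ n * g r) :=
  funext fun _ => (indicator_mul_right s (· ^ n) g).symm

theorem pow_pred_mul_rpow_neg {n : ℕ} (hn : 1 ≤ n) {r : ℝ} (hr : 0 < r) (α : ℝ) :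
    r ^ (n - 1) * r ^ (-α) = r ^ ((n : ℝ) - α - 1) := by
  rw [← Real.rpow_natCast, ← Real.rpow_add hr, Nat.cast_sub hn, Nat.cast_one]
  ring_nf

theorem compl_closedBall_zero_eq_preimage_norm {E : Type*} [SeminormedAddCommGroup E] (θ : ℝ) :
    (closedBall (0 : E) θ)ᶜ = (‖·‖) ⁻¹' Ioi θ := by
  ext; simp

theorem closedBall_zero_eq_preimage_norm {E : Type*} [SeminormedAddCommGroup E] (r : ℝ) :
    closedBall (0 : E) r = (‖·‖) ⁻¹' Iic r := by
  ext; simp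

theorem le_add_norm_or_le_norm_sub {E : Type*} [SeminormedAddCommGroup E] {ρ t : ℝ}
    (hρ : 0 < ρ) (ht : 0 ≤ t) {a : E} (h : ρ ^ 2 ≤ ‖a‖ ^ 2 + t ^ 2) (z : E) :
    min ρ 1 / 4 * (1 + ‖a‖) ≤ t + ‖z‖ ∨ min ρ 1 / 4 * (1 + ‖a‖) ≤ ‖a - z‖ := by
  have hρa : ρ ≤ t + ‖a‖ := by nlinarith [norm_nonneg a]
  have htri : ‖a‖ ≤ ‖z‖ + ‖a - z‖ := norm_le_insert' a z
  have hmin : min ρ 1 * (1 + ‖a‖) ≤ ρ + ‖a‖ := by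
    nlinarith [min_le_left ρ 1, min_le_right ρ 1, norm_nonneg a]
  by_contra! hcon
  linarith

theorem one_div_rpow_mul_rpow_le {E : Type*} [SeminormedAddCommGroup E] {α β γ θ s t : ℝ}
    (hβ : 0 ≤ β) (hγα : γ ≤ α) (hγ : 0 ≤ γ) (hθ : 0 < θ) (hs : 0 < s) (ht : 0 ≤ t) {a z : E}
    (hz : θ < ‖z‖) (hsplit : s ≤ t + ‖z‖ ∨ s ≤ ‖a - z‖) :
    1 / ((t + ‖z‖) ^ α * ‖a - z‖ ^ β) ≤ s ^ (-β) * ‖z‖ ^ (-α) +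
      θ ^ (-(α - γ)) * s ^ (-γ) * (closedBall 0 s).indicator (‖·‖ ^ (-β)) (a - z) := by
  have hz₀ : 0 < ‖z‖ := hθ.trans hz
  have hφ : 0 ≤ (closedBall 0 s).indicator (‖·‖ ^ (-β)) (a - z) :=
    indicator_nonneg (fun w _ => Real.rpow_nonneg (norm_nonneg w) _) _
  rw [one_div, mul_inv, ← Real.rpow_neg (by positivity), ← Real.rpow_neg (norm_nonneg _)]
  by_cases hfar : s ≤ ‖a - z‖
  · have hX : (t + ‖z‖) ^ (-α) ≤ ‖z‖ ^ (-α) :=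
      Real.rpow_le_rpow_of_nonpos hz₀ (by linarith) (by linarith)
    have hY : ‖a - z‖ ^ (-β) ≤ s ^ (-β) := Real.rpow_le_rpow_of_nonpos hs hfar (by linarith)
    calc (t + ‖z‖) ^ (-α) * ‖a - z‖ ^ (-β) ≤ ‖z‖ ^ (-α) * s ^ (-β) := by gcongr
      _ ≤ _ := le_add_of_le_of_nonneg (mul_comm _ _).le (mul_nonneg (by positivity) hφ)
  · have hnear : s ≤ t + ‖z‖ := hsplit.resolve_right hfar
    have hX : (t + ‖z‖) ^ (-α) ≤ θ ^ (-(α - γ)) * s ^ (-γ) := by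
      rw [show -α = -(α - γ) + -γ by ring, Real.rpow_add (by linarith)]
      exact mul_le_mul (Real.rpow_le_rpow_of_nonpos hθ (by linarith) (by linarith))
        (Real.rpow_le_rpow_of_nonpos hs hnear (by linarith)) (by positivity) (by positivity)
    rw [indicator_of_mem (by simpa using (not_le.1 hfar).le)]
    nlinarith [Real.rpow_nonneg hs.le (-β), Real.rpow_nonneg hz₀.le (-α),
      Real.rpow_nonneg (norm_nonneg (a - z)) (-β)]

section Radial

variable {E : Type*} [NormedAddCommGroup E] [NormedSpace ℝ E] [FiniteDimensional ℝ E]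
  [MeasurableSpace E] [BorelSpace E] [Nontrivial E] (μ : Measure E) [μ.IsAddHaarMeasure]

theorem integrableOn_fun_norm_preimage_addHaar {g : ℝ → ℝ} {s : Set ℝ} (hs : MeasurableSet s) :
    IntegrableOn (fun x : E => g ‖x‖) ((‖·‖) ⁻¹' s) μ ↔
      IntegrableOn (fun r => r ^ (dim E - 1) * g r) (Ioi 0 ∩ s) := by
  rw [← integrable_indicator_iff (measurable_norm hs), indicator_preimage_norm,
    integrable_fun_norm_addHaar μ]
  simp only [smul_eq_mul, pow_mul_indicator]
  rw [IntegrableOn, integrable_indicator_iff hs, IntegrableOn, IntegrableOn,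
    Measure.restrict_restrict hs, inter_comm]

theorem setIntegral_fun_norm_preimage_addHaar (g : ℝ → ℝ) {s : Set ℝ} (hs : MeasurableSet s) :
    ∫ x in (‖·‖) ⁻¹' s, g ‖x‖ ∂μ =
      dim E * μ.real (ball 0 1) * ∫ r in Ioi 0 ∩ s, r ^ (dim E - 1) * g r := by
  rw [← integral_indicator (measurable_norm hs), indicator_preimage_norm,
    integral_fun_norm_addHaar μ]
  simp only [smul_eq_mul, nsmul_eq_mul, pow_mul_indicator, setIntegral_indicator hs, mul_assoc]

theorem integrableOn_norm_rpow_compl_closedBall {α θ : ℝ} (hα : dim E < α) (hθ : 0 < θ) :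
    IntegrableOn (fun x : E => ‖x‖ ^ (-α)) (closedBall 0 θ)ᶜ μ := by
  rw [compl_closedBall_zero_eq_preimage_norm,
    integrableOn_fun_norm_preimage_addHaar μ (g := (· ^ (-α))) measurableSet_Ioi,
    Ioi_inter_Ioi, max_eq_right hθ.le]
  exact (integrableOn_Ioi_rpow_of_lt (by linarith) hθ).congr_fun
    (fun r hr => (pow_pred_mul_rpow_neg finrank_pos (hθ.trans hr) α).symm) measurableSet_Ioi

theorem integral_norm_rpow_compl_closedBall {α θ : ℝ} (hα : dim E < α) (hθ : 0 < θ) :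
    ∫ x in (closedBall (0 : E) θ)ᶜ, ‖x‖ ^ (-α) ∂μ =
      dim E * μ.real (ball 0 1) / (α - dim E) * θ ^ ((dim E : ℝ) - α) := by
  rw [compl_closedBall_zero_eq_preimage_norm,
    setIntegral_fun_norm_preimage_addHaar μ (· ^ (-α)) measurableSet_Ioi, Ioi_inter_Ioi,
    max_eq_right hθ.le, setIntegral_congr_fun measurableSet_Ioi
      (fun r hr => pow_pred_mul_rpow_neg finrank_pos (hθ.trans hr) α),
    integral_Ioi_rpow_of_lt (by linarith) hθ, sub_add_cancel, neg_div, ← div_neg, neg_sub]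
  ring

theorem integrableOn_norm_rpow_closedBall {β : ℝ} (hβ : β < dim E) (r : ℝ) :
    IntegrableOn (fun x : E => ‖x‖ ^ (-β)) (closedBall 0 r) μ := by
  rw [closedBall_zero_eq_preimage_norm,
    integrableOn_fun_norm_preimage_addHaar μ (g := (· ^ (-β))) measurableSet_Iic, Ioi_inter_Iic]
  exact (intervalIntegral.intervalIntegrable_rpow' (a := 0) (b := r) (by linarith)).1.congr_fun
    (fun r hr => (pow_pred_mul_rpow_neg finrank_pos hr.1 β).symm) measurableSet_Ioc

theorem integral_norm_rpow_closedBall {β r : ℝ} (hβ : β < dim E) (hr : 0 ≤ r) :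
    ∫ x in closedBall (0 : E) r, ‖x‖ ^ (-β) ∂μ =
      dim E * μ.real (ball 0 1) / (dim E - β) * r ^ ((dim E : ℝ) - β) := by
  rw [closedBall_zero_eq_preimage_norm,
    setIntegral_fun_norm_preimage_addHaar μ (· ^ (-β)) measurableSet_Iic, Ioi_inter_Iic,
    setIntegral_congr_fun measurableSet_Ioc (fun r hr => pow_pred_mul_rpow_neg finrank_pos hr.1 β),
    ← intervalIntegral.integral_of_le hr, integral_rpow (Or.inl (by linarith)),
    sub_add_cancel, Real.zero_rpow (by linarith), sub_zero]
  ring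

theorem setIntegral_compl_closedBall_one_div_rpow_mul_rpow_le {α β θ s t : ℝ}
    (hα : dim E < α) (hβ₀ : 0 ≤ β) (hβ : β < dim E) (hθ : 0 < θ) (hs : 0 < s) (ht : 0 ≤ t) (a : E)
    (hsplit : ∀ z : E, s ≤ t + ‖z‖ ∨ s ≤ ‖a - z‖) :
    ∫ z in (closedBall (0 : E) θ)ᶜ, 1 / ((t + ‖z‖) ^ α * ‖a - z‖ ^ β) ∂μ ≤
      (dim E * μ.real (ball 0 1) / (α - dim E) + dim E * μ.real (ball 0 1) / (dim E - β)) *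
        s ^ (-β) * θ ^ (-(α - dim E)) := by
  set D := (closedBall (0 : E) θ)ᶜ
  set φ : E → ℝ := (closedBall 0 s).indicator (‖·‖ ^ (-β))
  set M := θ ^ (-(α - dim E)) * s ^ (-(dim E : ℝ))
  have hF := (integrableOn_norm_rpow_compl_closedBall μ hα hθ).const_mul (s ^ (-β))
  have hG : Integrable (fun z => M * φ (a - z)) μ :=
    (((integrable_indicator_iff measurableSet_closedBall).2
      (integrableOn_norm_rpow_closedBall μ hβ s)).comp_sub_left a).const_mul _
  have hφ : ∀ w, 0 ≤ φ w := indicator_nonneg fun w _ => Real.rpow_nonneg (norm_nonneg w) _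
  have hpow : s ^ (-(dim E : ℝ)) * s ^ ((dim E : ℝ) - β) = s ^ (-β) := by
    rw [← Real.rpow_add hs]; ring_nf
  calc ∫ z in D, 1 / ((t + ‖z‖) ^ α * ‖a - z‖ ^ β) ∂μ
      ≤ ∫ z in D, s ^ (-β) * ‖z‖ ^ (-α) + M * φ (a - z) ∂μ := by
        refine integral_mono_of_nonneg (.of_forall fun z => by positivity) (hF.add hG.integrableOn)
          ((ae_restrict_iff' measurableSet_closedBall.compl).2 (.of_forall fun z hz => ?_))
        exact one_div_rpow_mul_rpow_le hβ₀ hα.le (Nat.cast_nonneg _) hθ hs ht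
          (by simpa using hz) (hsplit z)
    _ = s ^ (-β) * ∫ z in D, ‖z‖ ^ (-α) ∂μ + ∫ z in D, M * φ (a - z) ∂μ := by
        rw [integral_add hF hG.integrableOn, integral_const_mul]
    _ ≤ s ^ (-β) * ∫ z in D, ‖z‖ ^ (-α) ∂μ + M * ∫ w in closedBall (0 : E) s, ‖w‖ ^ (-β) ∂μ := by
        grw [setIntegral_le_integral hG (.of_forall fun z => mul_nonneg (by positivity) (hφ _))]
        rw [integral_const_mul, integral_sub_left_eq_self φ μ a,
          integral_indicator measurableSet_closedBall]
    _ = _ := by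
        rw [integral_norm_rpow_compl_closedBall μ hα hθ, integral_norm_rpow_closedBall μ hβ hs.le,
          ← neg_sub α]
        linear_combination
          (θ ^ (-(α - dim E)) * (dim E * μ.real (ball 0 1) / (dim E - β))) * hpow

end Radial

theorem stmt3_general (N : ℕ) (ρ α β : ℝ) (hρ : 0 < ρ) (hα : (N : ℝ) < α)
    (hβ0 : 0 < β) (hβ : β < N) :
    ∃ C : ℝ, 0 < C ∧ ∀ θ : ℝ, 0 < θ → θ < ρ →
      ∀ x y : EuclideanSpace ℝ (Fin N), ∀ t : ℝ, 0 < t →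
      ρ ^ 2 ≤ ‖y - x‖ ^ 2 + t ^ 2 →
      (∫ z in (Metric.closedBall (0 : EuclideanSpace ℝ (Fin N)) θ)ᶜ,
          1 / ((t + ‖z‖) ^ α * ‖y - z - x‖ ^ β)) ≤
        C * (1 + ‖y - x‖) ^ (-β) * θ ^ (-(α - (N : ℝ))) := by
  have hdim : dim (EuclideanSpace ℝ (Fin N)) = N := finrank_euclideanSpace_fin
  have hN : (0 : ℝ) < N := hβ0.trans hβ
  have : Nontrivial (EuclideanSpace ℝ (Fin N)) :=
    Module.nontrivial_of_finrank_pos (R := ℝ) (by rw [hdim]; exact_mod_cast hN)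
  have hball : 0 < volume.real (ball (0 : EuclideanSpace ℝ (Fin N)) 1) :=
    ENNReal.toReal_pos (measure_ball_pos volume 0 one_pos).ne' measure_ball_lt_top.ne
  set c := min ρ 1 / 4
  set K := N * volume.real (ball (0 : EuclideanSpace ℝ (Fin N)) 1) / (α - N) +
    N * volume.real (ball (0 : EuclideanSpace ℝ (Fin N)) 1) / (N - β)
  have hc : 0 < c := by positivity
  have hK : 0 < K := by
    have : 0 < α - N := sub_pos.2 hα
    have : 0 < N - β := sub_pos.2 hβ
    positivity
  refine ⟨K * c ^ (-β), by positivity, fun θ hθ _ x y t ht hρt => ?_⟩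
  simp_rw [sub_right_comm y _ x]
  calc _ ≤ K * (c * (1 + ‖y - x‖)) ^ (-β) * θ ^ (-(α - N)) := by
        simpa only [hdim] using setIntegral_compl_closedBall_one_div_rpow_mul_rpow_le volume
          (by rwa [hdim]) hβ0.le (by rwa [hdim]) hθ (by positivity) ht.le (y - x)
          (le_add_norm_or_le_norm_sub hρ ht.le hρt)
    _ = K * c ^ (-β) * (1 + ‖y - x‖) ^ (-β) * θ ^ (-(α - N)) := by
        rw [Real.mul_rpow hc.le (by positivity)]
        ring

/-- Lemma A.3, second inequality: for `ρ > θ > 0`, `α > N` and `0 < β < N`, there is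
`C > 0` independent of `θ` such that whenever `|y−x|² + t² ≥ ρ²` and `t > 0`,
`∫_{ℝ^N ∖ B_θ(0)} dz /((t+|z|)^α |y−z−x|^β) ≤ C (1+|y−x|)^{−β} θ^{−(α−N)}`. -/
theorem stmt3 (N : ℕ) (hN : 1 ≤ N) (ρ α β : ℝ) (hρ : 0 < ρ) (hα : (N : ℝ) < α)
    (hβ0 : 0 < β) (hβ : β < N) :
    ∃ C : ℝ, 0 < C ∧ ∀ θ : ℝ, 0 < θ → θ < ρ →
      ∀ x y : EuclideanSpace ℝ (Fin N), ∀ t : ℝ, 0 < t →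
      ρ ^ 2 ≤ ‖y - x‖ ^ 2 + t ^ 2 →
      (∫ z in (Metric.closedBall (0 : EuclideanSpace ℝ (Fin N)) θ)ᶜ,
          1 / ((t + ‖z‖) ^ α * ‖y - z - x‖ ^ β)) ≤
        C * (1 + ‖y - x‖) ^ (-β) * θ ^ (-(α - (N : ℝ))) :=
  stmt3_general N ρ α β hρ hα hβ0 hβ
end
end
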